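/- Let p ∈ OFS with gcd(p) = 1 and let k ≥ fw(p). Then the graph G(p,k) is connected. -/

import Mathlib

/-- `OFS p`: `p` is a strictly increasing nonempty finite sequence of positive integers. -/
def OFS (p : List ℕ) : Prop := p ≠ [] ∧ p.Pairwise (· < ·) ∧ ∀ x ∈ p, 0 < x

/-- The reduction operation `R`. -/
def R : List ℕ → List ℕ
  | [] => []
  | [a] => [a]
  | a :: b :: rest => (((b :: rest).map (fun x => x - a)).insert a).mergeSort (· ≤ ·)

/-- `max(p)` -/
def maxL (p : List ℕ) : ℕ := p.foldr max 0

/-- `gcd(p)` -/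
def gcdL (p : List ℕ) : ℕ := p.foldr Nat.gcd 0

/-- Fuel-based auxiliary for `f`; `maxL p + 1` fuel always suffices since
`maxL` strictly decreases under `R` for lists of length `> 1`. -/
def faux : ℕ → List ℕ → ℕ
  | _, [] => 0
  | _, [a] => a
  | 0, _ => 0
  | fuel+1, p => p.headI + faux fuel (R p)

/-- The function `f` of Castelli–Mignosi–Restivo: `f p = p₁` if `|p| = 1`,
and `f p = p₁ + f (R p)` otherwise. -/
def f (p : List ℕ) : ℕ := faux (maxL p + 1) p

/-- The function `fw` of Tijdeman–Zamboni. -/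
def fw (p : List ℕ) : ℕ :=
  if h : 1 < p.length ∧ gcdL p.dropLast = gcdL p ∧ f p.dropLast ≤ maxL p
  then fw p.dropLast
  else f p
termination_by p.length
decreasing_by
  simp only [List.length_dropLast]
  omega

/-- The Fine–Wilf graph `G(p,k)` on vertex set `{1,…,k}` (represented by `Fin k`,
with `v : Fin k` standing for the integer `v+1`); `i` and `j` are adjacent iff
`|i - j|` is an entry of `p`. -/
def G (p : List ℕ) (k : ℕ) : SimpleGraph (Fin k) where
  Adj i j := i ≠ j ∧ (((j : ℕ) - (i : ℕ)) ∈ p ∨ ((i : ℕ) - (j : ℕ)) ∈ p)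
  symm := by
    constructor
    intro i j h
    exact ⟨h.1.symm, h.2.symm⟩
  loopless := by
    constructor
    intro i h
    exact h.1 rfl

/-- `p` is trim. -/
def Trim (p : List ℕ) : Prop :=
  p.length = 1 ∨ (1 < p.length ∧
    (gcdL p ≠ gcdL p.dropLast ∨ (gcdL p = gcdL p.dropLast ∧ maxL p < f p.dropLast)))



lemma gcdL_dvd {l : List ℕ} {x : ℕ} (hx : x ∈ l) : gcdL l ∣ x := by
  induction l with
  | nil => cases hx
  | cons a t ih =>
    rcases List.mem_cons.1 hx with rfl | h
    · exact Nat.gcd_dvd_left _ _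
    · exact (Nat.gcd_dvd_right _ _).trans (ih h)

lemma dvd_gcdL {l : List ℕ} {d : ℕ} (h : ∀ x ∈ l, d ∣ x) : d ∣ gcdL l := by
  induction l with
  | nil => exact Dvd.intro 0 rfl
  | cons a t ih =>
    exact Nat.dvd_gcd (h a (List.mem_cons_self)) (ih fun x hx => h x (List.mem_cons_of_mem _ hx))

lemma gcdL_congr {l₁ l₂ : List ℕ} (h : ∀ x, x ∈ l₁ ↔ x ∈ l₂) : gcdL l₁ = gcdL l₂ :=
  Nat.dvd_antisymm (dvd_gcdL fun x hx => gcdL_dvd ((h x).2 hx))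
    (dvd_gcdL fun x hx => gcdL_dvd ((h x).1 hx))

lemma le_maxL {l : List ℕ} {x : ℕ} (hx : x ∈ l) : x ≤ maxL l := by
  induction l with
  | nil => cases hx
  | cons a t ih =>
    rcases List.mem_cons.1 hx with rfl | h
    · exact le_max_left _ _
    · exact (ih h).trans (le_max_right _ _)

lemma maxL_le {l : List ℕ} {m : ℕ} (h : ∀ x ∈ l, x ≤ m) : maxL l ≤ m := by
  induction l with
  | nil => exact Nat.zero_le m
  | cons a t ih =>
    exact max_le (h a (List.mem_cons_self)) (ih fun x hx => h x (List.mem_cons_of_mem _ hx))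

lemma headI_mem {l : List ℕ} (h : l ≠ []) : l.headI ∈ l := by
  cases l with
  | nil => exact absurd rfl h
  | cons a t => exact List.mem_cons_self

lemma mem_R {a b : ℕ} {rest : List ℕ} {x : ℕ} :
    x ∈ R (a :: b :: rest) ↔ x = a ∨ ∃ y ∈ b :: rest, x = y - a := by
  simp only [R, List.mem_mergeSort, List.mem_insert_iff, List.mem_map]
  constructor
  · rintro (rfl | ⟨y, hy, rfl⟩)
    · exact Or.inl rfl
    · exact Or.inr ⟨y, hy, rfl⟩
  · rintro (rfl | ⟨y, hy, rfl⟩)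
    · exact Or.inl rfl
    · exact Or.inr ⟨y, hy, rfl⟩

lemma a_mem_R {a b : ℕ} {rest : List ℕ} : a ∈ R (a :: b :: rest) := mem_R.2 (Or.inl rfl)

lemma sorted_map_sub {a : ℕ} {l : List ℕ} (hs : l.Pairwise (· < ·)) (hl : ∀ x ∈ l, a < x) :
    (l.map (· - a)).Pairwise (· < ·) := by
  induction l with
  | nil => exact List.Pairwise.nil
  | cons c t ih =>
    rw [List.pairwise_cons] at hs
    rw [List.map_cons, List.pairwise_cons]
    refine ⟨?_, ih hs.2 fun x hx => hl x (List.mem_cons_of_mem _ hx)⟩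
    rintro y hy
    simp only [List.mem_map] at hy
    obtain ⟨z, hz, rfl⟩ := hy
    have h1 := hs.1 z hz
    have h2 := hl c (List.mem_cons_self)
    omega

lemma sorted_R {a b : ℕ} {rest : List ℕ} (hs : (a :: b :: rest).Pairwise (· < ·)) :
    (R (a :: b :: rest)).Pairwise (· < ·) := by
  rw [List.pairwise_cons] at hs
  have hgt : ∀ x ∈ b :: rest, a < x := hs.1
  have hmapnd : ((b :: rest).map (· - a)).Nodup :=
    (sorted_map_sub hs.2 hgt).imp (fun h => Nat.ne_of_lt h)
  have hnd : (R (a :: b :: rest)).Nodup := by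
    have : (((b :: rest).map (fun x => x - a)).insert a).Nodup := hmapnd.insert
    exact (List.mergeSort_perm _ _).symm.nodup this
  have hle : (R (a :: b :: rest)).Pairwise (· ≤ ·) := by
    have := List.pairwise_mergeSort (le := fun a b : ℕ => decide (a ≤ b))
      (fun a b c => by simp; omega) (fun a b => by simp; omega)
      (((b :: rest).map (fun x => x - a)).insert a)
    exact this.imp (fun h => by simpa using h)
  exact (hle.and hnd).imp fun ⟨h1, h2⟩ => lt_of_le_of_ne h1 h2

lemma R_ne_nil {a b : ℕ} {rest : List ℕ} : R (a :: b :: rest) ≠ [] := by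
  intro h
  have := a_mem_R (a := a) (b := b) (rest := rest)
  rw [h] at this
  cases this

lemma pos_R {a b : ℕ} {rest : List ℕ} (hs : (a :: b :: rest).Pairwise (· < ·))
    (hpos : ∀ x ∈ a :: b :: rest, 0 < x) : ∀ x ∈ R (a :: b :: rest), 0 < x := by
  intro x hx
  rw [List.pairwise_cons] at hs
  rcases mem_R.1 hx with rfl | ⟨y, hy, rfl⟩
  · exact hpos x (List.mem_cons_self)
  · have := hs.1 y hy
    omega

lemma gcd_map_sub {a : ℕ} (l : List ℕ) (h : ∀ x ∈ l, a ≤ x) :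
    Nat.gcd a (gcdL (l.map (· - a))) = Nat.gcd a (gcdL l) := by
  induction l with
  | nil => rfl
  | cons c t ih =>
    have hc : a ≤ c := h c (List.mem_cons_self)
    have hac : Nat.gcd a (c - a) = Nat.gcd a c := by
      conv_rhs => rw [show c = (c - a) + a by omega]
      rw [Nat.gcd_add_self_right]
    have iht := ih fun x hx => h x (List.mem_cons_of_mem _ hx)
    show Nat.gcd a (Nat.gcd (c - a) (gcdL (t.map (· - a)))) = Nat.gcd a (Nat.gcd c (gcdL t))
    rw [← Nat.gcd_assoc, hac, Nat.gcd_comm a c, Nat.gcd_assoc, iht, ← Nat.gcd_assoc,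
      Nat.gcd_comm c a, Nat.gcd_assoc]

lemma gcdL_R {a b : ℕ} {rest : List ℕ} (hs : (a :: b :: rest).Pairwise (· < ·)) :
    gcdL (R (a :: b :: rest)) = gcdL (a :: b :: rest) := by
  rw [List.pairwise_cons] at hs
  have h1 : gcdL (R (a :: b :: rest)) = gcdL (a :: (b :: rest).map (· - a)) := by
    apply gcdL_congr
    intro x
    rw [mem_R, List.mem_cons, List.mem_map]
    constructor
    · rintro (rfl | ⟨y, hy, rfl⟩)
      · exact Or.inl rfl
      · exact Or.inr ⟨y, hy, rfl⟩
    · rintro (rfl | ⟨y, hy, rfl⟩)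
      · exact Or.inl rfl
      · exact Or.inr ⟨y, hy, rfl⟩
  rw [h1]
  show Nat.gcd a (gcdL ((b :: rest).map (· - a))) = Nat.gcd a (gcdL (b :: rest))
  exact gcd_map_sub _ fun x hx => le_of_lt (hs.1 x hx)

lemma maxL_R_lt {a b : ℕ} {rest : List ℕ} (hs : (a :: b :: rest).Pairwise (· < ·))
    (hpos : ∀ x ∈ a :: b :: rest, 0 < x) :
    maxL (R (a :: b :: rest)) < maxL (a :: b :: rest) := by
  rw [List.pairwise_cons] at hs
  have hb : b ≤ maxL (a :: b :: rest) := le_maxL (List.mem_cons_of_mem _ (List.mem_cons_self))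
  have hab : a < b := hs.1 b (List.mem_cons_self)
  have ha : 0 < a := hpos a (List.mem_cons_self)
  have h1 : maxL (R (a :: b :: rest)) ≤ maxL (a :: b :: rest) - 1 := by
    apply maxL_le
    intro x hx
    rcases mem_R.1 hx with rfl | ⟨y, hy, rfl⟩
    · omega
    · have := le_maxL (l := a :: b :: rest) (List.mem_cons_of_mem _ hy)
      omega
  omega

lemma maxL_ge_a {a b : ℕ} {rest : List ℕ} : a ≤ maxL (R (a :: b :: rest)) := le_maxL a_mem_R

lemma faux_cons {fuel a b : ℕ} {rest : List ℕ} :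
    faux (fuel + 1) (a :: b :: rest) = a + faux fuel (R (a :: b :: rest)) := rfl

lemma faux_stable : ∀ n p, maxL p ≤ n → p.Pairwise (· < ·) → (∀ x ∈ p, 0 < x) →
    ∀ fuel, maxL p ≤ fuel → faux fuel p = f p := by
  intro n
  induction n using Nat.strong_induction_on with
  | _ n ih =>
    intro p hn hs hpos fuel hfuel
    match p with
    | [] => cases fuel <;> rfl
    | [a] => cases fuel <;> rfl
    | a :: b :: rest =>
      have hab : a < b := (List.pairwise_cons.1 hs).1 b (List.mem_cons_self)
      have ha : 0 < a := hpos a (List.mem_cons_self)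
      have hbm : b ≤ maxL (a :: b :: rest) :=
        le_maxL (List.mem_cons_of_mem _ (List.mem_cons_self))
      have hRlt : maxL (R (a :: b :: rest)) < maxL (a :: b :: rest) := maxL_R_lt hs hpos
      have hRs := sorted_R hs
      have hRpos := pos_R hs hpos
      match fuel, hfuel with
      | 0, hfuel => omega
      | fuel + 1, hfuel =>
        rw [faux_cons]
        show _ = faux (maxL (a :: b :: rest) + 1) (a :: b :: rest)
        rw [faux_cons]
        congr 1
        have h1 := ih (maxL (R (a :: b :: rest))) (by omega) (R (a :: b :: rest)) le_rfl
          hRs hRpos fuel (by omega)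
        have h2 := ih (maxL (R (a :: b :: rest))) (by omega) (R (a :: b :: rest)) le_rfl
          hRs hRpos (maxL (a :: b :: rest)) (by omega)
        rw [h1, h2]

lemma f_cons {a b : ℕ} {rest : List ℕ} (hs : (a :: b :: rest).Pairwise (· < ·))
    (hpos : ∀ x ∈ a :: b :: rest, 0 < x) :
    f (a :: b :: rest) = a + f (R (a :: b :: rest)) := by
  show faux (maxL (a :: b :: rest) + 1) _ = _
  rw [faux_cons]
  congr 1
  exact faux_stable (maxL (R (a :: b :: rest))) _ le_rfl (sorted_R hs) (pos_R hs hpos)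
    (maxL (a :: b :: rest)) (le_of_lt (maxL_R_lt hs hpos))

lemma f_singleton (a : ℕ) : f [a] = a := rfl

lemma maxL_le_f : ∀ n p, maxL p ≤ n → p ≠ [] → p.Pairwise (· < ·) → (∀ x ∈ p, 0 < x) →
    maxL p ≤ f p := by
  intro n
  induction n using Nat.strong_induction_on with
  | _ n ih =>
    intro p hn hne hs hpos
    match p with
    | [a] => simp [f_singleton, maxL]
    | a :: b :: rest =>
      have hRlt : maxL (R (a :: b :: rest)) < maxL (a :: b :: rest) := maxL_R_lt hs hpos
      have hR := ih (maxL (R (a :: b :: rest))) (by omega) (R (a :: b :: rest)) le_rfl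
        R_ne_nil (sorted_R hs) (pos_R hs hpos)
      rw [f_cons hs hpos]
      have hmax : maxL (a :: b :: rest) ≤ a + maxL (R (a :: b :: rest)) := by
        apply maxL_le
        intro y hy
        rcases List.mem_cons.1 hy with rfl | hy'
        · omega
        · have hmem : y - a ∈ R (a :: b :: rest) := mem_R.2 (Or.inr ⟨y, hy', rfl⟩)
          have h1 := le_maxL hmem
          have h2 := (List.pairwise_cons.1 hs).1 y hy'
          omega
      omega

lemma f_pos {p : List ℕ} (hne : p ≠ []) (hs : p.Pairwise (· < ·)) (hpos : ∀ x ∈ p, 0 < x) :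
    0 < f p := by
  have h1 := maxL_le_f (maxL p) p le_rfl hne hs hpos
  have h2 := le_maxL (headI_mem hne)
  have h3 := hpos _ (headI_mem hne)
  omega

lemma reachable_lift {α β : Type*} {A : SimpleGraph α} {B : SimpleGraph β} (φ : α → β)
    (hφ : ∀ i j, A.Adj i j → B.Reachable (φ i) (φ j)) {i j : α} (h : A.Reachable i j) :
    B.Reachable (φ i) (φ j) := by
  obtain ⟨w⟩ := h
  induction w with
  | nil => exact SimpleGraph.Reachable.refl _
  | cons h w ih => exact (hφ _ _ h).trans ih

lemma G_mono {p q : List ℕ} (h : ∀ x ∈ p, x ∈ q) (k : ℕ) : G p k ≤ G q k := by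
  intro i j hij
  exact ⟨hij.1, hij.2.imp (h _) (h _)⟩

lemma main_connected : ∀ n p, maxL p ≤ n → p ≠ [] → p.Pairwise (· < ·) → (∀ x ∈ p, 0 < x) →
    gcdL p = 1 → ∀ k, f p ≤ k → (G p k).Connected := by
  intro n
  induction n using Nat.strong_induction_on with
  | _ n ih =>
    intro p hn hne hs hpos hg k hk
    match p with
    | [a] =>
      have ha : a = 1 := by simpa [gcdL] using hg
      subst ha
      have hk1 : 1 ≤ k := le_trans (by simp [f_singleton]) hk
      have h0 : (0 : ℕ) < k := hk1
      rw [SimpleGraph.connected_iff]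
      refine ⟨?_, ⟨⟨0, h0⟩⟩⟩
      have key : ∀ m (hm : m < k), (G [1] k).Reachable ⟨0, h0⟩ ⟨m, hm⟩ := by
        intro m
        induction m with
        | zero => intro hm; exact SimpleGraph.Reachable.refl _
        | succ m ihm =>
          intro hm
          refine (ihm (by omega)).trans (SimpleGraph.Adj.reachable ?_)
          refine ⟨?_, Or.inl ?_⟩
          · intro hcon
            have := congrArg Fin.val hcon
            simp only [Fin.val_mk] at this
            omega
          · simp only [Fin.val_mk]
            have : m + 1 - m = 1 := by omega
            rw [this]
            exact List.mem_cons_self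
      intro u v
      exact ((key u.val (by omega)).symm.trans (key v.val (by omega)))
    | a :: b :: rest =>
      set p := a :: b :: rest with hp
      set q := R p with hq
      have hab : a < b := (List.pairwise_cons.1 hs).1 b (List.mem_cons_self)
      have ha : 0 < a := hpos a (List.mem_cons_self)
      have hqs : q.Pairwise (· < ·) := sorted_R hs
      have hqpos : ∀ x ∈ q, 0 < x := pos_R hs hpos
      have hqne : q ≠ [] := R_ne_nil
      have hqg : gcdL q = 1 := by rw [hq, gcdL_R hs]; exact hg
      have hqlt : maxL q < maxL p := maxL_R_lt hs hpos
      have hfq : maxL q ≤ f q := maxL_le_f (maxL q) q le_rfl hqne hqs hqpos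
      have haq : a ≤ maxL q := maxL_ge_a
      have hfc : f p = a + f q := f_cons hs hpos
      have hkq : f q ≤ k - a := by omega
      have hak : a + f q ≤ k := by omega
      have hIH : (G q (k - a)).Connected :=
        ih (maxL q) (by omega) q le_rfl hqne hqs hqpos hqg (k - a) hkq
      have hle : k - a ≤ k := Nat.sub_le _ _
      set φ : Fin (k - a) → Fin k := Fin.castLE hle with hφ
      -- one-directional adjacency lift
      have key : ∀ i j : Fin (k - a), (i : ℕ) < (j : ℕ) → ((j : ℕ) - (i : ℕ)) ∈ q →
          (G p k).Reachable (φ i) (φ j) := by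
        intro i j hij hd
        rcases mem_R.1 hd with hda | ⟨y, hy, hdy⟩
        · refine SimpleGraph.Adj.reachable ?_
          refine ⟨?_, Or.inl ?_⟩
          · intro hcon
            have := congrArg Fin.val hcon
            simp [φ] at this
            omega
          · simp only [φ, Fin.coe_castLE]
            rw [hda]
            exact List.mem_cons_self
        · have hya : a < y := (List.pairwise_cons.1 hs).1 y hy
          have hyp : y ∈ p := List.mem_cons_of_mem _ hy
          have hjk : (j : ℕ) < k - a := j.isLt
          have hw : (i : ℕ) + y < k := by omega
          set w : Fin k := ⟨(i : ℕ) + y, hw⟩ with hwdef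
          have r1 : (G p k).Adj (φ i) w := by
            refine ⟨?_, Or.inl ?_⟩
            · intro hcon
              have := congrArg Fin.val hcon
              simp [φ, hwdef] at this
              omega
            · simp only [φ, Fin.coe_castLE, hwdef]
              have : (i : ℕ) + y - (i : ℕ) = y := by omega
              rw [this]
              exact hyp
          have r2 : (G p k).Adj w (φ j) := by
            refine ⟨?_, Or.inr ?_⟩
            · intro hcon
              have := congrArg Fin.val hcon
              simp [φ, hwdef] at this
              omega
            · simp only [φ, Fin.coe_castLE, hwdef]
              have : (i : ℕ) + y - (j : ℕ) = a := by omega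
              rw [this]
              exact List.mem_cons_self
          exact r1.reachable.trans r2.reachable
      have lift : ∀ i j : Fin (k - a), (G q (k - a)).Adj i j →
          (G p k).Reachable (φ i) (φ j) := by
        intro i j hadj
        obtain ⟨hne', hmem⟩ := hadj
        rcases Nat.lt_or_ge (i : ℕ) (j : ℕ) with hlt | hge
        · rcases hmem with hm | hm
          · exact key i j hlt hm
          · exfalso
            have : (i : ℕ) - (j : ℕ) = 0 := by omega
            rw [this] at hm
            exact absurd (hqpos 0 hm) (lt_irrefl 0)
        · have hlt : (j : ℕ) < (i : ℕ) := by
            rcases Nat.lt_or_ge (j : ℕ) (i : ℕ) with h' | h'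
            · exact h'
            · exact absurd (Fin.ext (by omega)) hne'
          rcases hmem with hm | hm
          · exfalso
            have : (j : ℕ) - (i : ℕ) = 0 := by omega
            rw [this] at hm
            exact absurd (hqpos 0 hm) (lt_irrefl 0)
          · exact (key j i hlt hm).symm
      have hfqpos : 0 < f q := f_pos hqne hqs hqpos
      have h0 : 0 < k - a := by omega
      have hk0 : 0 < k := by omega
      -- every vertex reachable from φ 0
      have reach : ∀ v : Fin k, (G p k).Reachable (φ ⟨0, h0⟩) v := by
        intro v
        rcases Nat.lt_or_ge (v : ℕ) (k - a) with hv | hv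
        · have : v = φ ⟨(v : ℕ), hv⟩ := Fin.ext (by simp [φ])
          rw [this]
          exact reachable_lift φ lift (hIH.preconnected ⟨0, h0⟩ ⟨(v : ℕ), hv⟩)
        · have hva : a ≤ (v : ℕ) := by omega
          have hvk : (v : ℕ) - a < k - a := by
            have := v.isLt
            omega
          have hadj : (G p k).Adj (φ ⟨(v : ℕ) - a, hvk⟩) v := by
            refine ⟨?_, Or.inl ?_⟩
            · intro hcon
              have := congrArg Fin.val hcon
              simp [φ] at this
              omega
            · simp only [φ, Fin.coe_castLE]
              have : (v : ℕ) - ((v : ℕ) - a) = a := by omega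
              rw [this]
              exact List.mem_cons_self
          exact (reachable_lift φ lift (hIH.preconnected ⟨0, h0⟩ ⟨(v : ℕ) - a, hvk⟩)).trans
            hadj.reachable
      rw [SimpleGraph.connected_iff]
      exact ⟨fun u v => (reach u).symm.trans (reach v), ⟨⟨0, hk0⟩⟩⟩

lemma fw_aux : ∀ n p, p.length ≤ n → OFS p → gcdL p = 1 → ∀ k, fw p ≤ k →
    (G p k).Connected := by
  intro n
  induction n using Nat.strong_induction_on with
  | _ n ih =>
    intro p hn hp hg k hk
    obtain ⟨hne, hs, hpos⟩ := hp
    rw [fw] at hk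
    by_cases h : 1 < p.length ∧ gcdL p.dropLast = gcdL p ∧ f p.dropLast ≤ maxL p
    · rw [dif_pos h] at hk
      have hsub : p.dropLast.Sublist p := List.dropLast_sublist p
      have hlen : p.dropLast.length = p.length - 1 := List.length_dropLast
      have hdne : p.dropLast ≠ [] := by
        apply List.ne_nil_of_length_pos
        omega
      have hdOFS : OFS p.dropLast :=
        ⟨hdne, List.Pairwise.sublist hsub hs, fun x hx => hpos x (hsub.subset hx)⟩
      have hdg : gcdL p.dropLast = 1 := h.2.1.trans hg
      have hcon := ih (n - 1) (by omega) p.dropLast (by omega) hdOFS hdg k hk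
      exact hcon.mono (G_mono (fun x hx => hsub.subset hx) k)
    · rw [dif_neg h] at hk
      exact main_connected (maxL p) p le_rfl hne hs hpos hg k hk

theorem connected_of_ge_fw (p : List ℕ) (hp : OFS p) (hg : gcdL p = 1)
    (k : ℕ) (hk : fw p ≤ k) : (G p k).Connected :=
  fw_aux p.length p le_rfl hp hg k hk
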